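/- arXiv:cs/0011015 — 2 statements merged into one kernel-verified Lean document; each statement's English description precedes it below -/
import Mathlib

section
/- (No-bad-node lemma) Let G be a bipartite graph with positive integer edge weights, maximum weight N, and h ∈ [1,N]. Let C_h be a minimum weight cover of G_h (edges of weight ≥ N−h+1, reduced by N−h). Then there exists a minimum weight cover C of G such that C(u) ≥ C_h(u) for every node u. -/
open Finset

variable {V : Type*} [Fintype V] [DecidableEq V]

/-- `C` is a (weighted vertex) cover of the bipartite graph on parts `X`, `Y`
with edge weights `w` (where `w x y = 0` means no edge). -/
def IsCover (X Y : Finset V) (w : V → V → ℕ) (C : V → ℕ) : Prop :=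
  ∀ x ∈ X, ∀ y ∈ Y, w x y ≤ C x + C y

/-- The weight of a cover: the sum of its values over all nodes. -/
def coverWt (X Y : Finset V) (C : V → ℕ) : ℕ := ∑ u ∈ X ∪ Y, C u

/-- `M` is a matching of the weighted bipartite graph: a set of pairwise
node-disjoint edges, each going from `X` to `Y` with positive weight. -/
def IsBMatching (X Y : Finset V) (w : V → V → ℕ) (M : Finset (V × V)) : Prop :=
  (∀ e ∈ M, e.1 ∈ X ∧ e.2 ∈ Y ∧ 0 < w e.1 e.2) ∧
  (∀ e ∈ M, ∀ f ∈ M, e ≠ f → e.1 ≠ f.1 ∧ e.2 ≠ f.2)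

/-- The total weight of a matching. -/
def mWt (w : V → V → ℕ) (M : Finset (V × V)) : ℕ := ∑ e ∈ M, w e.1 e.2

open Classical in
/-- The maximum weight of a matching of the bipartite graph `(X, Y, w)`. -/
noncomputable def mwm (X Y : Finset V) (w : V → V → ℕ) : ℕ :=
  Finset.sup ((Finset.univ : Finset (V × V)).powerset.filter fun M => IsBMatching X Y w M)
    fun M => mWt w M

/-- The minimum weight of a cover of the bipartite graph `(X, Y, w)`. -/
noncomputable def mwc (X Y : Finset V) (w : V → V → ℕ) : ℕ :=
  sInf {n : ℕ | ∃ C : V → ℕ, IsCover X Y w C ∧ coverWt X Y C = n}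

/-!
Take a minimum cover `C₀` of `G` and a maximum matching `M` of `G_h`, whose weight equals that of
`C_h`. Complementary slackness makes every edge of `M` tight for `C_h` and makes `C_h` vanish off
`M`; as the edges of `M` weigh more than `N - h` in `G`, each `xy ∈ M` has
`C_h(x) + C_h(y) + (N - h) ≤ C₀(x) + C₀(y)`. Hence at most one endpoint of `xy` is bad, and its
deficit can be taken from the other endpoint. The result has the weight of `C₀`, dominates `C_h`,
and every node either keeps at least its `C₀`-value or exceeds `C_h` by `N - h`; either way each
edge of `G` stays covered.
-/

namespace IsBMatching

section
omit [Fintype V] [DecidableEq V]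

variable {X Y : Finset V} {w : V → V → ℕ} {M : Finset (V × V)}

lemma fst_mem (hM : IsBMatching X Y w M) {e : V × V} (he : e ∈ M) : e.1 ∈ X := (hM.1 e he).1

lemma snd_mem (hM : IsBMatching X Y w M) {e : V × V} (he : e ∈ M) : e.2 ∈ Y := (hM.1 e he).2.1

lemma weight_pos (hM : IsBMatching X Y w M) {e : V × V} (he : e ∈ M) : 0 < w e.1 e.2 :=
  (hM.1 e he).2.2

lemma eq_of_fst_eq (hM : IsBMatching X Y w M) {e f : V × V} (he : e ∈ M) (hf : f ∈ M)
    (h : e.1 = f.1) : e = f :=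
  by_contra fun hne => (hM.2 e he f hf hne).1 h

lemma eq_of_snd_eq (hM : IsBMatching X Y w M) {e f : V × V} (he : e ∈ M) (hf : f ∈ M)
    (h : e.2 = f.2) : e = f :=
  by_contra fun hne => (hM.2 e he f hf hne).2 h

lemma fst_ne_snd (hXY : Disjoint X Y) (hM : IsBMatching X Y w M) {e f : V × V} (he : e ∈ M)
    (hf : f ∈ M) : e.1 ≠ f.2 :=
  disjoint_left.mp hXY (hM.fst_mem he) |>.imp fun h => h ▸ hM.snd_mem hf

lemma mWt_le_sum_endpoints (hM : IsBMatching X Y w M) {C : V → ℕ} (hC : IsCover X Y w C) :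
    mWt w M ≤ ∑ e ∈ M, (C e.1 + C e.2) :=
  sum_le_sum fun _ he => hC _ (hM.fst_mem he) _ (hM.snd_mem he)

end

end IsBMatching

section
omit [Fintype V]

variable {X Y : Finset V} {w : V → V → ℕ} {M : Finset (V × V)}

def endpoints (M : Finset (V × V)) : Finset V := M.image Prod.fst ∪ M.image Prod.snd

lemma mem_endpoints {u : V} : u ∈ endpoints M ↔ ∃ e ∈ M, e.1 = u ∨ e.2 = u := by
  simp only [endpoints, mem_union, mem_image, ← exists_or, ← and_or_left]

namespace IsBMatching

lemma endpoints_subset (hM : IsBMatching X Y w M) : endpoints M ⊆ X ∪ Y :=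
  union_subset_union (fun _ hu => by obtain ⟨e, he, rfl⟩ := mem_image.mp hu; exact hM.fst_mem he)
    (fun _ hu => by obtain ⟨e, he, rfl⟩ := mem_image.mp hu; exact hM.snd_mem he)

lemma sum_endpoints (hXY : Disjoint X Y) (hM : IsBMatching X Y w M) (f : V → ℕ) :
    ∑ u ∈ endpoints M, f u = ∑ e ∈ M, (f e.1 + f e.2) := by
  have hdisj : Disjoint (M.image Prod.fst) (M.image Prod.snd) := by
    simp only [disjoint_left, mem_image]
    rintro _ ⟨e, he, rfl⟩ ⟨f, hf, hfe⟩
    exact hM.fst_ne_snd hXY he hf hfe.symm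
  rw [endpoints, sum_union hdisj, sum_image (fun e he f hf => hM.eq_of_fst_eq he hf),
    sum_image (fun e he f hf => hM.eq_of_snd_eq he hf), sum_add_distrib]

lemma sum_endpoints_le_coverWt (hXY : Disjoint X Y) (hM : IsBMatching X Y w M) (C : V → ℕ) :
    ∑ e ∈ M, (C e.1 + C e.2) ≤ coverWt X Y C :=
  hM.sum_endpoints hXY C ▸ sum_le_sum_of_subset hM.endpoints_subset

variable {C : V → ℕ}

lemma mWt_le_coverWt (hXY : Disjoint X Y) (hM : IsBMatching X Y w M) (hC : IsCover X Y w C) :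
    mWt w M ≤ coverWt X Y C :=
  (hM.mWt_le_sum_endpoints hC).trans (hM.sum_endpoints_le_coverWt hXY C)

lemma weight_eq_of_mWt_eq_coverWt (hXY : Disjoint X Y) (hM : IsBMatching X Y w M)
    (hC : IsCover X Y w C) (heq : mWt w M = coverWt X Y C) {e : V × V} (he : e ∈ M) :
    w e.1 e.2 = C e.1 + C e.2 := by
  have hsum : mWt w M = ∑ e ∈ M, (C e.1 + C e.2) :=
    le_antisymm (hM.mWt_le_sum_endpoints hC) (heq ▸ hM.sum_endpoints_le_coverWt hXY C)
  exact (sum_eq_sum_iff_of_le fun _ he => hC _ (hM.fst_mem he) _ (hM.snd_mem he)).mp hsum e he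

lemma eq_zero_of_mWt_eq_coverWt (hXY : Disjoint X Y) (hM : IsBMatching X Y w M)
    (hC : IsCover X Y w C) (heq : mWt w M = coverWt X Y C) {u : V} (hu : u ∈ X ∪ Y)
    (hfree : u ∉ endpoints M) : C u = 0 := by
  have hsum : ∑ v ∈ endpoints M, C v = coverWt X Y C :=
    le_antisymm (sum_le_sum_of_subset hM.endpoints_subset)
      (heq ▸ hM.sum_endpoints hXY C ▸ hM.mWt_le_sum_endpoints hC)
  have hrest : ∑ v ∈ (X ∪ Y) \ endpoints M, C v = 0 := by
    have := sum_sdiff (f := C) hM.endpoints_subset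
    rw [hsum, coverWt] at this
    omega
  exact sum_eq_zero_iff.mp hrest u (mem_sdiff.mpr ⟨hu, hfree⟩)

lemma add_le_of_mWt_eq_coverWt {n : ℕ} (hXY : Disjoint X Y)
    (hM : IsBMatching X Y (fun x y => w x y - n) M) (hC : IsCover X Y (fun x y => w x y - n) C)
    (heq : mWt (fun x y => w x y - n) M = coverWt X Y C) {C₀ : V → ℕ} (hC₀ : IsCover X Y w C₀)
    {e : V × V} (he : e ∈ M) : C e.1 + C e.2 + n ≤ C₀ e.1 + C₀ e.2 := by
  have htight : w e.1 e.2 - n = C e.1 + C e.2 := hM.weight_eq_of_mWt_eq_coverWt hXY hC heq he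
  have hpos : 0 < w e.1 e.2 - n := hM.weight_pos he
  have hcov := hC₀ _ (hM.fst_mem he) _ (hM.snd_mem he)
  omega

end IsBMatching

lemma IsCover.of_le_of_le_or_add_le {n : ℕ} {C₀ Cₕ C : V → ℕ} (hC₀ : IsCover X Y w C₀)
    (hCₕ : IsCover X Y (fun x y => w x y - n) Cₕ) (hle : ∀ u ∈ X ∪ Y, Cₕ u ≤ C u)
    (hor : ∀ u ∈ X ∪ Y, C₀ u ≤ C u ∨ Cₕ u + n ≤ C u) : IsCover X Y w C := by
  intro x hx y hy
  have hxX := mem_union_left Y hx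
  have hyY := mem_union_right X hy
  have hCₕxy : w x y - n ≤ Cₕ x + Cₕ y := hCₕ x hx y hy
  have hC₀xy := hC₀ x hx y hy
  have := hle x hxX
  have := hle y hyY
  rcases hor x hxX with hx' | hx' <;> rcases hor y hyY with hy' | hy' <;> omega

variable {w' : V → V → ℕ}

noncomputable def partner (M : Finset (V × V)) (u : V) : V :=
  if h : ∃ e ∈ M, e.1 = u then h.choose.2
  else if h : ∃ e ∈ M, e.2 = u then h.choose.1 else u

lemma partner_of_not_mem_endpoints {u : V} (hu : u ∉ endpoints M) : partner M u = u := by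
  simp only [mem_endpoints, not_exists, not_and, not_or] at hu
  rw [partner, dif_neg fun ⟨e, he, h⟩ => (hu e he).1 h, dif_neg fun ⟨e, he, h⟩ => (hu e he).2 h]

namespace IsBMatching

lemma partner_fst (hM : IsBMatching X Y w' M) {e : V × V} (he : e ∈ M) : partner M e.1 = e.2 := by
  have h : ∃ f ∈ M, f.1 = e.1 := ⟨e, he, rfl⟩
  rw [partner, dif_pos h, hM.eq_of_fst_eq h.choose_spec.1 he h.choose_spec.2]

lemma partner_snd (hXY : Disjoint X Y) (hM : IsBMatching X Y w' M) {e : V × V} (he : e ∈ M) :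
    partner M e.2 = e.1 := by
  have h₁ : ¬∃ f ∈ M, f.1 = e.2 := fun ⟨f, hf, hfe⟩ => hM.fst_ne_snd hXY hf he hfe
  have h₂ : ∃ f ∈ M, f.2 = e.2 := ⟨e, he, rfl⟩
  rw [partner, dif_neg h₁, dif_pos h₂, hM.eq_of_snd_eq h₂.choose_spec.1 he h₂.choose_spec.2]

end IsBMatching

/-- Raising a bad node to its `Cₕ`-value is paid for by its partner; an unmatched node is its own
partner, and then the two changes cancel. -/
noncomputable def fixBadNodes (C₀ Cₕ : V → ℕ) (M : Finset (V × V)) (u : V) : ℕ :=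
  max (C₀ u) (Cₕ u) - (Cₕ (partner M u) - C₀ (partner M u))

variable {C₀ Cₕ : V → ℕ} {n : ℕ}

lemma fixBadNodes_of_not_mem_endpoints {u : V} (hu : u ∉ endpoints M) :
    fixBadNodes C₀ Cₕ M u = C₀ u := by
  rw [fixBadNodes, partner_of_not_mem_endpoints hu]
  omega

lemma coverWt_fixBadNodes (hXY : Disjoint X Y) (hM : IsBMatching X Y w' M)
    (hedge : ∀ e ∈ M, Cₕ e.1 + Cₕ e.2 ≤ C₀ e.1 + C₀ e.2) :
    coverWt X Y (fixBadNodes C₀ Cₕ M) = coverWt X Y C₀ := by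
  rw [coverWt, coverWt, ← sum_sdiff hM.endpoints_subset, ← sum_sdiff (f := C₀) hM.endpoints_subset,
    hM.sum_endpoints hXY, hM.sum_endpoints hXY]
  congr 1
  · exact sum_congr rfl fun u hu => fixBadNodes_of_not_mem_endpoints (mem_sdiff.mp hu).2
  · refine sum_congr rfl fun e he => ?_
    have := hedge e he
    simp only [fixBadNodes, hM.partner_fst he, hM.partner_snd hXY he]
    omega

lemma le_fixBadNodes (hXY : Disjoint X Y) (hM : IsBMatching X Y w' M)
    (hedge : ∀ e ∈ M, Cₕ e.1 + Cₕ e.2 ≤ C₀ e.1 + C₀ e.2)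
    (hfree : ∀ u ∈ X ∪ Y, u ∉ endpoints M → Cₕ u = 0) {u : V} (hu : u ∈ X ∪ Y) :
    Cₕ u ≤ fixBadNodes C₀ Cₕ M u := by
  by_cases hmatched : u ∈ endpoints M
  · obtain ⟨e, he, rfl | rfl⟩ := mem_endpoints.mp hmatched <;> have := hedge e he
    · rw [fixBadNodes, hM.partner_fst he]; omega
    · rw [fixBadNodes, hM.partner_snd hXY he]; omega
  · rw [hfree u hu hmatched]
    exact Nat.zero_le _

lemma fixBadNodes_cases (hXY : Disjoint X Y) (hM : IsBMatching X Y w' M)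
    (hedge : ∀ e ∈ M, Cₕ e.1 + Cₕ e.2 + n ≤ C₀ e.1 + C₀ e.2) (u : V) :
    C₀ u ≤ fixBadNodes C₀ Cₕ M u ∨ Cₕ u + n ≤ fixBadNodes C₀ Cₕ M u := by
  by_cases hmatched : u ∈ endpoints M
  · obtain ⟨e, he, rfl | rfl⟩ := mem_endpoints.mp hmatched <;> have := hedge e he
    · rw [fixBadNodes, hM.partner_fst he]; omega
    · rw [fixBadNodes, hM.partner_snd hXY he]; omega
  · exact Or.inl (fixBadNodes_of_not_mem_endpoints hmatched).ge

end

theorem exists_min_cover_no_bad_node_general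
    (X Y : Finset V) (hXY : Disjoint X Y) (w : V → V → ℕ) (N h : ℕ)
    (Ch : V → ℕ)
    (hCh : IsCover X Y (fun x y => w x y - (N - h)) Ch)
    (hChmin : ∀ C' : V → ℕ, IsCover X Y (fun x y => w x y - (N - h)) C' →
      coverWt X Y Ch ≤ coverWt X Y C')
    (hKE : ∀ w' : V → V → ℕ, ∃ (C : V → ℕ) (M : Finset (V × V)),
      IsCover X Y w' C ∧ IsBMatching X Y w' M ∧ mWt w' M = coverWt X Y C) :
    ∃ C : V → ℕ, IsCover X Y w C ∧
      (∀ C' : V → ℕ, IsCover X Y w C' → coverWt X Y C ≤ coverWt X Y C') ∧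
      (∀ u ∈ X ∪ Y, Ch u ≤ C u) := by
  obtain ⟨C₀, M₀, hC₀, hM₀, hC₀M₀⟩ := hKE w
  obtain ⟨C, M, hC, hM, hCM⟩ := hKE fun x y => w x y - (N - h)
  have htight : mWt _ M = coverWt X Y Ch :=
    le_antisymm (hM.mWt_le_coverWt hXY hCh) (hCM ▸ hChmin C hC)
  have hedge : ∀ e ∈ M, Ch e.1 + Ch e.2 + (N - h) ≤ C₀ e.1 + C₀ e.2 := fun _ he =>
    hM.add_le_of_mWt_eq_coverWt hXY hCh htight hC₀ he
  have hedge₀ : ∀ e ∈ M, Ch e.1 + Ch e.2 ≤ C₀ e.1 + C₀ e.2 := fun e he =>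
    le_self_add.trans (hedge e he)
  have hfree : ∀ u ∈ X ∪ Y, u ∉ endpoints M → Ch u = 0 := fun _ hu =>
    hM.eq_zero_of_mWt_eq_coverWt hXY hCh htight hu
  have hle : ∀ u ∈ X ∪ Y, Ch u ≤ fixBadNodes C₀ Ch M u := fun _ hu =>
    le_fixBadNodes hXY hM hedge₀ hfree hu
  refine ⟨fixBadNodes C₀ Ch M,
    hC₀.of_le_of_le_or_add_le hCh hle fun u _ => fixBadNodes_cases hXY hM hedge u,
    fun C' hC' => ?_, hle⟩
  rw [coverWt_fixBadNodes hXY hM hedge₀, ← hC₀M₀]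
  exact hM₀.mWt_le_coverWt hXY hC'

/-- The no-bad-node lemma: there is a minimum weight cover `C` of `G` with
`C(u) ≥ C_h(u)` for every node `u`. -/
theorem exists_min_cover_no_bad_node
    (X Y : Finset V) (hXY : Disjoint X Y) (w : V → V → ℕ) (N h : ℕ)
    (hwN : ∀ x ∈ X, ∀ y ∈ Y, w x y ≤ N) (hNmax : ∃ x ∈ X, ∃ y ∈ Y, w x y = N)
    (h1 : 1 ≤ h) (hN : h ≤ N)
    (Ch : V → ℕ)
    (hCh : IsCover X Y (fun x y => w x y - (N - h)) Ch)
    (hChmin : ∀ C' : V → ℕ, IsCover X Y (fun x y => w x y - (N - h)) C' →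
      coverWt X Y Ch ≤ coverWt X Y C')
    (hKE : ∀ w' : V → V → ℕ, ∃ (C : V → ℕ) (M : Finset (V × V)),
      IsCover X Y w' C ∧ IsBMatching X Y w' M ∧ mWt w' M = coverWt X Y C) :
    ∃ C : V → ℕ, IsCover X Y w C ∧
      (∀ C' : V → ℕ, IsCover X Y w C' → coverWt X Y C ≤ coverWt X Y C') ∧
      (∀ u ∈ X ∪ Y, Ch u ≤ C u) :=
  exists_min_cover_no_bad_node_general X Y hXY w N h Ch hCh hChmin hKE
end

section
/- Let M be a matching of G and define φ(M) = ⋃_{uv∈M} {u^1 v^β, u^2 v^{β−1}, …, u^β v^1} where β = w(u,v). Then φ(M) is a matching of the unfolded graph φ(G), and |φ(M)| = Σ_{uv∈M} w(u,v). -/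
open Finset

variable {V : Type*} [Fintype V] [DecidableEq V]

/-- Adjacency in the unfolded graph `φ(G)`: the copies `u^i` of a node `u` are the
pairs `(u, i)` with `i ≥ 1`, and for each edge `uv` of weight `β = w u v` the
unfolded graph has the (unweighted) edges `u^i v^{β+1-i}` for `1 ≤ i ≤ β`. -/
def phiAdj (X Y : Finset V) (w : V → V → ℕ) (a b : V × ℕ) : Prop :=
  (a.1 ∈ X ∧ b.1 ∈ Y ∧ 1 ≤ a.2 ∧ 1 ≤ b.2 ∧ 0 < w a.1 b.1 ∧ a.2 + b.2 = w a.1 b.1 + 1) ∨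
  (b.1 ∈ X ∧ a.1 ∈ Y ∧ 1 ≤ b.2 ∧ 1 ≤ a.2 ∧ 0 < w b.1 a.1 ∧ b.2 + a.2 = w b.1 a.1 + 1)

/-- `M` is a matching (set of pairwise node-disjoint edges) of the unweighted
graph with adjacency relation `adj`. -/
def IsUMatching {α : Type*} (adj : α → α → Prop) (M : Finset (α × α)) : Prop :=
  (∀ e ∈ M, adj e.1 e.2) ∧ (∀ e ∈ M, e.1 ≠ e.2) ∧
  (∀ e ∈ M, ∀ f ∈ M, e ≠ f →
    e.1 ≠ f.1 ∧ e.1 ≠ f.2 ∧ e.2 ≠ f.1 ∧ e.2 ≠ f.2)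

/-- The unfolding `φ(M)` of a matching `M` of `G`: each edge `uv ∈ M` of weight
`β` contributes the edges `u^1 v^β, …, u^β v^1`. -/
def phiM (w : V → V → ℕ) (M : Finset (V × V)) : Finset ((V × ℕ) × (V × ℕ)) :=
  M.biUnion fun e =>
    (Finset.Icc 1 (w e.1 e.2)).image fun i => ((e.1, i), (e.2, w e.1 e.2 + 1 - i))

/-- The number of copies of a node `u` in the unfolded graph: the maximum weight
of an edge incident to `u`. -/
def alphaCopies (X Y : Finset V) (w : V → V → ℕ) (u : V) : ℕ :=
  (X ∪ Y).sup fun v => max (w u v) (w v u)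

section Unfolding

variable {α β : Type*}

theorem IsBMatching.injOn_fst {X Y : Finset α} {w : α → α → ℕ} {M : Finset (α × α)}
    (hM : IsBMatching X Y w M) : Set.InjOn Prod.fst (M : Set (α × α)) :=
  fun e he f hf h => by_contra fun hef => (hM.2 e he f hf hef).1 h

theorem IsBMatching.injOn_snd {X Y : Finset α} {w : α → α → ℕ} {M : Finset (α × α)}
    (hM : IsBMatching X Y w M) : Set.InjOn Prod.snd (M : Set (α × α)) :=
  fun e he f hf h => by_contra fun hef => (hM.2 e he f hf hef).2 h

theorem isUMatching_of_injOn {adj : β → β → Prop} {S T : Set β} (hST : Disjoint S T)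
    {N : Finset (β × β)} (hadj : ∀ p ∈ N, adj p.1 p.2) (hside : ∀ p ∈ N, p.1 ∈ S ∧ p.2 ∈ T)
    (hfst : Set.InjOn Prod.fst (N : Set (β × β))) (hsnd : Set.InjOn Prod.snd (N : Set (β × β))) :
    IsUMatching adj N := by
  have hcross : ∀ p ∈ N, ∀ q ∈ N, p.1 ≠ q.2 := fun p hp q hq h =>
    hST.ne_of_mem (hside p hp).1 (hside q hq).2 h
  refine ⟨hadj, fun p hp => hcross p hp p hp, fun p hp q hq hpq => ⟨?_, hcross p hp q hq,
    (hcross q hq p hp).symm, ?_⟩⟩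
  · exact fun h => hpq (hfst hp hq h)
  · exact fun h => hpq (hsnd hp hq h)

variable [DecidableEq α] {w : α → α → ℕ} {M : Finset (α × α)} {p : (α × ℕ) × (α × ℕ)}

theorem mem_phiM : p ∈ phiM w M ↔
    ∃ e ∈ M, ∃ i ∈ Icc 1 (w e.1 e.2), ((e.1, i), (e.2, w e.1 e.2 + 1 - i)) = p := by
  simp only [phiM, mem_biUnion, mem_image]

theorem endpoints_mem_of_mem_phiM (hp : p ∈ phiM w M) : (p.1.1, p.2.1) ∈ M := by
  obtain ⟨e, he, i, -, rfl⟩ := mem_phiM.mp hp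
  exact he

theorem phiAdj_of_mem_phiM {X Y : Finset α} (hM : ∀ e ∈ M, e.1 ∈ X ∧ e.2 ∈ Y ∧ 0 < w e.1 e.2)
    (hp : p ∈ phiM w M) : phiAdj X Y w p.1 p.2 := by
  obtain ⟨e, he, i, hi, rfl⟩ := mem_phiM.mp hp
  obtain ⟨hX, hY, hw⟩ := hM e he
  rw [mem_Icc] at hi
  left
  dsimp only
  exact ⟨hX, hY, hi.1, by omega, hw, by omega⟩

theorem phiM_injOn_fst (hM : Set.InjOn Prod.fst (M : Set (α × α))) :
    Set.InjOn Prod.fst (phiM w M : Set ((α × ℕ) × (α × ℕ))) := by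
  intro p hp q hq h
  obtain ⟨e, he, i, -, rfl⟩ := mem_phiM.mp hp
  obtain ⟨f, hf, j, -, rfl⟩ := mem_phiM.mp hq
  simp only [Prod.mk.injEq] at h
  obtain rfl := hM he hf h.1
  rw [h.2]

-- The copy `v^{β+1-i}` determines `i` only because `i ≤ β` (truncated subtraction).
theorem phiM_injOn_snd (hM : Set.InjOn Prod.snd (M : Set (α × α))) :
    Set.InjOn Prod.snd (phiM w M : Set ((α × ℕ) × (α × ℕ))) := by
  intro p hp q hq h
  obtain ⟨e, he, i, hi, rfl⟩ := mem_phiM.mp hp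
  obtain ⟨f, hf, j, hj, rfl⟩ := mem_phiM.mp hq
  simp only [Prod.mk.injEq] at h
  obtain rfl := hM he hf h.1
  rw [mem_Icc] at hi hj
  obtain rfl : i = j := by omega
  rfl

theorem card_phiM (hM : Set.InjOn Prod.fst (M : Set (α × α))) :
    #(phiM w M) = ∑ e ∈ M, w e.1 e.2 := by
  rw [phiM, card_biUnion]
  · refine sum_congr rfl fun e _ => ?_
    rw [card_image_of_injective _ fun i j h => congrArg (·.1.2) h, Nat.card_Icc, Nat.add_sub_cancel]
  · intro e he f hf hef
    simp only [disjoint_left, mem_image]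
    rintro p ⟨i, -, rfl⟩ ⟨j, -, h⟩
    exact hef (hM hf he (congrArg (·.1.1) h)).symm

end Unfolding

/-- The unfolding `φ(M)` of a matching `M` of `G` is a matching of `φ(G)`, and
its cardinality is the total weight of `M`. -/
theorem phiM_is_matching_card_eq_weight
    (X Y : Finset V) (hXY : Disjoint X Y) (w : V → V → ℕ)
    (M : Finset (V × V)) (hM : IsBMatching X Y w M) :
    IsUMatching (phiAdj X Y w) (phiM w M) ∧
    (phiM w M).card = ∑ e ∈ M, w e.1 e.2 := by
  have hsides : Disjoint (Prod.fst ⁻¹' (X : Set V)) (Prod.fst ⁻¹' (Y : Set V) : Set (V × ℕ)) :=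
    (disjoint_coe.mpr hXY).preimage Prod.fst
  refine ⟨isUMatching_of_injOn hsides (fun p hp => phiAdj_of_mem_phiM hM.1 hp) (fun p hp => ?_)
    (phiM_injOn_fst hM.injOn_fst) (phiM_injOn_snd hM.injOn_snd), card_phiM hM.injOn_fst⟩
  obtain ⟨hX, hY, -⟩ := hM.1 _ (endpoints_mem_of_mem_phiM hp)
  exact ⟨hX, hY⟩
end
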